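/- For every prime p there is a unique monoid isomorphism τ_p : MR(Z_p) → MR(F_p[[t]]) such that for every integer m ≥ 0 and every unit u ∈ Z_p^×, τ_p(mres(u p^m)) = mres((u mod p) t^m), and τ_p is compatible with the natural maps to the residue field F_p. -/

import Mathlib

open IsLocalRing

variable (A : Type*) [CommRing A] [IsLocalRing A]

/-- `z ~ z'` iff `z' ∈ z·(1 + m)`, where `m` is the maximal ideal. -/
def mrel : A → A → Prop := fun z z' => ∃ u ∈ maximalIdeal A, z' = z * (1 + u)
/-- The set of multiplicative residues `MR(A) = A/(1+m)`. -/
def MR : Type _ := Quot (mrel A)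

variable {A}

/-- The multiplicative residue of an element of `A`. -/
def mres (a : A) : MR A := Quot.mk _ a

lemma mrel_refl (a : A) : mrel A a a := ⟨0, zero_mem _, by ring⟩

lemma mrel_mul {z z' w w' : A} (h1 : mrel A z z') (h2 : mrel A w w') :
    mrel A (z * w) (z' * w') := by
  obtain ⟨u, hu, rfl⟩ := h1
  obtain ⟨v, hv, rfl⟩ := h2
  exact ⟨u + v + u * v, add_mem (add_mem hu hv) (Ideal.mul_mem_right _ _ hu), by ring⟩

/-- The commutative monoid structure on `MR(A)` induced by multiplication on `A`. -/
noncomputable instance : CommMonoid (MR A) where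
  mul := Quot.map₂ (· * ·) (fun _ _ _ h => mrel_mul (mrel_refl _) h)
    (fun _ _ _ h => mrel_mul h (mrel_refl _))
  one := mres (1 : A)
  mul_assoc := by rintro ⟨a⟩ ⟨b⟩ ⟨c⟩; exact congrArg (Quot.mk _) (mul_assoc a b c)
  one_mul := by rintro ⟨a⟩; exact congrArg (Quot.mk _) (one_mul a)
  mul_one := by rintro ⟨a⟩; exact congrArg (Quot.mk _) (mul_one a)
  mul_comm := by rintro ⟨a⟩ ⟨b⟩; exact congrArg (Quot.mk _) (mul_comm a b)

/-- The natural multiplicative map `s_A : MR(A) → A/m`. -/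
noncomputable def sA : MR A → A ⧸ maximalIdeal A :=
  Quot.lift (residue A) (by
    rintro a b ⟨u, hu, rfl⟩
    have h0 : residue A u = 0 := Ideal.Quotient.eq_zero_iff_mem.mpr hu
    simp [map_mul, map_add, h0] <;> rfl)


/-!
In a discrete valuation ring `R` with uniformizer `ϖ` and residue map `φ : R → k`, every nonzero
element is `u * ϖ ^ n` with `u` a unit, and two such elements lie in the same class of
`MR R = R/(1 + m)` exactly when they have the same `n` and the same residue `φ u`. So `MR R` is
`kˣ × ℕ` with a zero adjoined, which depends only on `k`. Since `ℤ_p` and `𝔽_p[[t]]` both have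
residue field `𝔽_p`, composing the two identifications gives `τ_p`; residues are preserved because
both sides send `(c, n)` to `c * 0 ^ n`. Uniqueness holds because `MR R` consists of `0` and the
classes of the `u * ϖ ^ m`.
-/

section

noncomputable abbrev MR.commMonoidWithZero : CommMonoidWithZero (MR A) where
  __ := (inferInstance : CommMonoid (MR A))
  zero := mres 0
  zero_mul := by rintro ⟨a⟩; exact congrArg (Quot.mk _) (zero_mul a)
  mul_zero := by rintro ⟨a⟩; exact congrArg (Quot.mk _) (mul_zero a)

-- Not a global instance: it would give `MR A` a second path to its multiplication.
attribute [local instance] MR.commMonoidWithZero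

lemma mres_zero : mres (0 : A) = 0 := rfl

lemma mres_mul (a b : A) : mres (a * b) = mres a * mres b := rfl

lemma mres_pow (a : A) (n : ℕ) : mres (a ^ n) = mres a ^ n := by
  induction n with
  | zero => rw [pow_zero, pow_zero]; rfl
  | succ n ih => rw [pow_succ, mres_mul, ih, pow_succ]

lemma mres_surjective : Function.Surjective (mres : A → MR A) := Quot.mk_surjective

lemma isUnit_one_add_of_mem_maximalIdeal {u : A} (hu : u ∈ maximalIdeal A) : IsUnit (1 + u) :=
  notMem_maximalIdeal.1 fun h =>
    (maximalIdeal.isMaximal A).ne_top ((Ideal.eq_top_iff_one _).2 (by simpa using sub_mem h hu))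

lemma mrel_symm {a b : A} (h : mrel A a b) : mrel A b a := by
  obtain ⟨u, hu, rfl⟩ := h
  obtain ⟨v, hv⟩ := isUnit_one_add_of_mem_maximalIdeal hu
  have hvv : ((v⁻¹ : Aˣ) : A) * v = 1 := v.inv_mul
  refine ⟨(v⁻¹ : Aˣ) - 1, ?_, ?_⟩
  · have : ((v⁻¹ : Aˣ) : A) - 1 = -((v⁻¹ : Aˣ) * u) := by
      rw [hv] at hvv; linear_combination hvv
    exact this ▸ neg_mem (Ideal.mul_mem_left _ _ hu)
  · rw [hv] at hvv; linear_combination (-a) * hvv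

lemma mrel_trans {a b c : A} (h₁ : mrel A a b) (h₂ : mrel A b c) : mrel A a c := by
  obtain ⟨u, hu, rfl⟩ := h₁
  obtain ⟨v, hv, rfl⟩ := h₂
  exact ⟨u + v + u * v, add_mem (add_mem hu hv) (Ideal.mul_mem_right _ _ hu), by ring⟩

lemma mres_eq_mres_iff {a b : A} : mres a = mres b ↔ mrel A a b :=
  Equivalence.quot_mk_eq_iff ⟨mrel_refl, mrel_symm, mrel_trans⟩ a b

lemma mres_eq_zero_iff {a : A} : mres a = 0 ↔ a = 0 := by
  refine ⟨fun h => ?_, fun h => h ▸ mres_zero⟩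
  obtain ⟨u, hu, h⟩ := mres_eq_mres_iff.1 h
  exact (isUnit_one_add_of_mem_maximalIdeal hu).mul_left_eq_zero.1 h.symm

section ResidueMap

variable {k : Type*} [CommRing k] (φ : A →+* k)

lemma map_eq_zero_iff_mem_maximalIdeal (hφ : RingHom.ker φ = maximalIdeal A) {a : A} :
    φ a = 0 ↔ a ∈ maximalIdeal A := by
  rw [← hφ, RingHom.mem_ker]

lemma mres_eq_mres_of_map_eq (hφ : RingHom.ker φ = maximalIdeal A) {a b : A}
    (hab : φ a = φ b) (ha : φ a ≠ 0) : mres a = mres b := by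
  obtain ⟨v, rfl⟩ : IsUnit a :=
    notMem_maximalIdeal.1 fun h => ha ((map_eq_zero_iff_mem_maximalIdeal φ hφ).2 h)
  refine mres_eq_mres_iff.2 ⟨(v⁻¹ : Aˣ) * b - 1, ?_, by simp⟩
  rw [← map_eq_zero_iff_mem_maximalIdeal φ hφ, map_sub, map_mul, ← hab, ← map_mul,
    Units.inv_mul, map_one, sub_self]

noncomputable def MR.residueHom (hφ : RingHom.ker φ = maximalIdeal A) : MR A →*₀ k where
  toFun := Quot.lift φ <| by
    rintro a _ ⟨u, hu, rfl⟩
    rw [map_mul, map_add, map_one, (map_eq_zero_iff_mem_maximalIdeal φ hφ).2 hu, add_zero,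
      mul_one]
  map_zero' := map_zero φ
  map_one' := map_one φ
  map_mul' := by rintro ⟨a⟩ ⟨b⟩; exact map_mul φ a b

lemma MR.residueHom_mres (hφ : RingHom.ker φ = maximalIdeal A) (a : A) :
    MR.residueHom φ hφ (mres a) = φ a := rfl

end ResidueMap

section DiscreteValuationRing

variable {R : Type*} [CommRing R] [IsDomain R] [IsDiscreteValuationRing R] {ϖ : R}

lemma MR.mulEquiv_ext_of_mres_unit_mul_pow {S : Type*} [CommRing S] [IsLocalRing S]
    (hϖ : Irreducible ϖ) {f g : MR R ≃* MR S}
    (h : ∀ (u : Rˣ) (m : ℕ), f (mres (u * ϖ ^ m)) = g (mres (u * ϖ ^ m))) : f = g := by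
  refine MulEquiv.ext fun x => ?_
  obtain ⟨a, rfl⟩ := mres_surjective x
  obtain rfl | ha := eq_or_ne a 0
  · rw [mres_zero, map_zero, map_zero]
  · obtain ⟨m, u, rfl⟩ := IsDiscreteValuationRing.eq_unit_mul_pow_irreducible ha hϖ
    exact h u m

lemma map_eq_and_eq_of_mres_unit_mul_pow_eq {k : Type*} [CommRing k] (φ : R →+* k)
    (hφ : RingHom.ker φ = maximalIdeal R) (hϖ : Irreducible ϖ) {u v : Rˣ} {m n : ℕ}
    (h : mres (u * ϖ ^ m) = mres (v * ϖ ^ n)) : φ u = φ v ∧ m = n := by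
  obtain ⟨x, hx, hvx⟩ := mres_eq_mres_iff.1 h
  set w : Rˣ := u * (isUnit_one_add_of_mem_maximalIdeal hx).unit
  have hw : (w : R) * ϖ ^ m = v * ϖ ^ n := by
    rw [hvx, Units.val_mul, IsUnit.unit_spec]; ring
  obtain rfl := IsDiscreteValuationRing.unit_mul_pow_congr_pow hϖ hϖ w v m n hw
  obtain rfl := IsDiscreteValuationRing.unit_mul_pow_congr_unit hϖ w v m m hw
  refine ⟨?_, rfl⟩
  rw [Units.val_mul, IsUnit.unit_spec, map_mul, map_add,
    (map_eq_zero_iff_mem_maximalIdeal φ hφ).2 hx, map_one, add_zero, mul_one]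

variable {k : Type*} [Field k] (φ : R →+* k)

lemma exists_unit_map_eq (hφ : RingHom.ker φ = maximalIdeal R) (hφs : Function.Surjective φ)
    (c : kˣ) : ∃ u : Rˣ, φ u = c := by
  obtain ⟨a, ha⟩ := hφs c
  have hunit : IsUnit a := notMem_maximalIdeal.1 fun h =>
    c.ne_zero (ha ▸ (map_eq_zero_iff_mem_maximalIdeal φ hφ).2 h)
  exact ⟨hunit.unit, ha⟩

noncomputable def MR.unitsLift (hφ : RingHom.ker φ = maximalIdeal R)
    (hφs : Function.Surjective φ) : kˣ →* MR R where
  toFun c := mres (Function.surjInv hφs c)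
  map_one' := mres_eq_mres_of_map_eq φ hφ (by simp [Function.surjInv_eq hφs])
    (by simp [Function.surjInv_eq hφs])
  map_mul' c d := mres_eq_mres_of_map_eq φ hφ (by simp [Function.surjInv_eq hφs])
    (by simp [Function.surjInv_eq hφs])

/-- `MR R` is `kˣ × ℕ` with a zero adjoined: `(φ u, n)` corresponds to the class of `u * ϖ ^ n`. -/
noncomputable def MR.ofNormalForm (ϖ : R) (hφ : RingHom.ker φ = maximalIdeal R)
    (hφs : Function.Surjective φ) : WithZero (kˣ × Multiplicative ℕ) →*₀ MR R :=
  WithZero.lift' ((MR.unitsLift φ hφ hφs).coprod (powersHom (MR R) (mres ϖ)))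

lemma MR.ofNormalForm_coe (hφ : RingHom.ker φ = maximalIdeal R) (hφs : Function.Surjective φ)
    (x : kˣ × Multiplicative ℕ) {a : R} (ha : φ a = x.1) :
    MR.ofNormalForm φ ϖ hφ hφs x = mres (a * ϖ ^ x.2.toAdd) := by
  rw [MR.ofNormalForm, WithZero.lift'_coe, MonoidHom.coprod_apply, powersHom_apply, mres_mul,
    mres_pow]
  congr 1
  exact mres_eq_mres_of_map_eq φ hφ (by simp [Function.surjInv_eq hφs, ha]) (by
    simp [Function.surjInv_eq hφs])

lemma MR.ofNormalForm_coe_ne_zero (hϖ : Irreducible ϖ) (hφ : RingHom.ker φ = maximalIdeal R)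
    (hφs : Function.Surjective φ) (x : kˣ × Multiplicative ℕ) :
    MR.ofNormalForm φ ϖ hφ hφs x ≠ 0 := by
  obtain ⟨u, hu⟩ := exists_unit_map_eq φ hφ hφs x.1
  rw [MR.ofNormalForm_coe φ hφ hφs x hu, Ne, mres_eq_zero_iff]
  exact mul_ne_zero u.ne_zero (pow_ne_zero _ hϖ.ne_zero)

lemma MR.ofNormalForm_injective (hϖ : Irreducible ϖ) (hφ : RingHom.ker φ = maximalIdeal R)
    (hφs : Function.Surjective φ) : Function.Injective (MR.ofNormalForm φ ϖ hφ hφs) := by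
  intro x y hxy
  induction x using WithZero.recZeroCoe with
  | zero =>
    induction y using WithZero.recZeroCoe with
    | zero => rfl
    | coe y =>
      exact absurd (hxy.symm.trans (map_zero _)) (MR.ofNormalForm_coe_ne_zero φ hϖ hφ hφs y)
  | coe x =>
    induction y using WithZero.recZeroCoe with
    | zero => exact absurd (hxy.trans (map_zero _)) (MR.ofNormalForm_coe_ne_zero φ hϖ hφ hφs x)
    | coe y =>
      obtain ⟨u, hu⟩ := exists_unit_map_eq φ hφ hφs x.1
      obtain ⟨v, hv⟩ := exists_unit_map_eq φ hφ hφs y.1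
      rw [MR.ofNormalForm_coe φ hφ hφs x hu, MR.ofNormalForm_coe φ hφ hφs y hv] at hxy
      obtain ⟨huv, hmn⟩ := map_eq_and_eq_of_mres_unit_mul_pow_eq φ hφ hϖ hxy
      exact congrArg _ (Prod.ext (Units.ext (hu ▸ hv ▸ huv)) hmn)

lemma MR.ofNormalForm_surjective (hϖ : Irreducible ϖ) (hφ : RingHom.ker φ = maximalIdeal R)
    (hφs : Function.Surjective φ) : Function.Surjective (MR.ofNormalForm φ ϖ hφ hφs) := by
  intro x
  obtain ⟨a, rfl⟩ := mres_surjective x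
  obtain rfl | ha := eq_or_ne a 0
  · exact ⟨0, map_zero _⟩
  · obtain ⟨m, u, rfl⟩ := IsDiscreteValuationRing.eq_unit_mul_pow_irreducible ha hϖ
    exact ⟨_, MR.ofNormalForm_coe φ hφ hφs (Units.map φ u, Multiplicative.ofAdd m) rfl⟩

noncomputable def MR.normalFormEquiv (hϖ : Irreducible ϖ) (hφ : RingHom.ker φ = maximalIdeal R)
    (hφs : Function.Surjective φ) : WithZero (kˣ × Multiplicative ℕ) ≃* MR R :=
  MulEquiv.ofBijective (MR.ofNormalForm φ ϖ hφ hφs)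
    ⟨MR.ofNormalForm_injective φ hϖ hφ hφs, MR.ofNormalForm_surjective φ hϖ hφ hφs⟩

lemma MR.normalFormEquiv_apply (hϖ : Irreducible ϖ) (hφ : RingHom.ker φ = maximalIdeal R)
    (hφs : Function.Surjective φ) (x : WithZero (kˣ × Multiplicative ℕ)) :
    MR.normalFormEquiv φ hϖ hφ hφs x = MR.ofNormalForm φ ϖ hφ hφs x :=
  rfl

lemma MR.normalFormEquiv_symm_mres_unit_mul_pow (hϖ : Irreducible ϖ)
    (hφ : RingHom.ker φ = maximalIdeal R) (hφs : Function.Surjective φ) (u : Rˣ) (m : ℕ) :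
    (MR.normalFormEquiv φ hϖ hφ hφs).symm (mres (u * ϖ ^ m)) =
      ((Units.map φ u, Multiplicative.ofAdd m) : kˣ × Multiplicative ℕ) :=
  (MulEquiv.symm_apply_eq _).2
    (MR.ofNormalForm_coe φ hφ hφs (Units.map φ u, Multiplicative.ofAdd m) rfl).symm

lemma MR.residueHom_normalFormEquiv (hϖ : Irreducible ϖ) (hφ : RingHom.ker φ = maximalIdeal R)
    (hφs : Function.Surjective φ) (x : kˣ × Multiplicative ℕ) :
    MR.residueHom φ hφ (MR.normalFormEquiv φ hϖ hφ hφs x) = x.1 * 0 ^ x.2.toAdd := by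
  obtain ⟨u, hu⟩ := exists_unit_map_eq φ hφ hφs x.1
  have hϖ0 : φ ϖ = 0 :=
    (map_eq_zero_iff_mem_maximalIdeal φ hφ).2 ((mem_maximalIdeal ϖ).2 hϖ.not_isUnit)
  rw [MR.normalFormEquiv_apply, MR.ofNormalForm_coe φ hφ hφs x hu,
    MR.residueHom_mres, map_mul, map_pow, hu, hϖ0]

end DiscreteValuationRing

section Transfer

variable {R S k : Type*} [CommRing R] [IsDomain R] [IsDiscreteValuationRing R]
  [CommRing S] [IsDomain S] [IsDiscreteValuationRing S] [Field k] {ϖ : R} {ϖ' : S}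
  (φ : R →+* k) (ψ : S →+* k)

noncomputable def MR.transferEquiv (hϖ : Irreducible ϖ) (hφ : RingHom.ker φ = maximalIdeal R)
    (hφs : Function.Surjective φ) (hϖ' : Irreducible ϖ') (hψ : RingHom.ker ψ = maximalIdeal S)
    (hψs : Function.Surjective ψ) : MR R ≃* MR S :=
  (MR.normalFormEquiv φ hϖ hφ hφs).symm.trans (MR.normalFormEquiv ψ hϖ' hψ hψs)

lemma MR.transferEquiv_mres_unit_mul_pow (hϖ : Irreducible ϖ)
    (hφ : RingHom.ker φ = maximalIdeal R) (hφs : Function.Surjective φ) (hϖ' : Irreducible ϖ')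
    (hψ : RingHom.ker ψ = maximalIdeal S) (hψs : Function.Surjective ψ) (u : Rˣ) (m : ℕ)
    {b : S} (hb : ψ b = φ u) :
    MR.transferEquiv φ ψ hϖ hφ hφs hϖ' hψ hψs (mres (u * ϖ ^ m)) = mres (b * ϖ' ^ m) := by
  rw [MR.transferEquiv, MulEquiv.trans_apply, MR.normalFormEquiv_symm_mres_unit_mul_pow,
    MR.normalFormEquiv_apply]
  exact MR.ofNormalForm_coe ψ hψ hψs (Units.map φ u, Multiplicative.ofAdd m) hb

lemma MR.residueHom_transferEquiv (hϖ : Irreducible ϖ)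
    (hφ : RingHom.ker φ = maximalIdeal R) (hφs : Function.Surjective φ) (hϖ' : Irreducible ϖ')
    (hψ : RingHom.ker ψ = maximalIdeal S) (hψs : Function.Surjective ψ) (x : MR R) :
    MR.residueHom ψ hψ (MR.transferEquiv φ ψ hϖ hφ hφs hϖ' hψ hψs x) = MR.residueHom φ hφ x := by
  obtain ⟨y, rfl⟩ := (MR.normalFormEquiv φ hϖ hφ hφs).surjective x
  rw [MR.transferEquiv, MulEquiv.trans_apply, MulEquiv.symm_apply_apply]
  induction y using WithZero.recZeroCoe with
  | zero => simp only [map_zero]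
  | coe y => rw [MR.residueHom_normalFormEquiv, MR.residueHom_normalFormEquiv]

end Transfer

end

/-- For every prime `p` there is a unique monoid isomorphism
`τ_p : MR(ℤ_p) ≃* MR(𝔽_p[[t]])` with `τ_p(mres (u·pᵐ)) = mres((u mod p)·tᵐ)` for every
`m ≥ 0` and unit `u` of `ℤ_p`; moreover `τ_p` is compatible with the natural maps to the
residue field `𝔽_p`. -/
theorem padic_powerSeries_mulEquiv (p : ℕ) [Fact p.Prime] :
    ∃! τ : MR ℤ_[p] ≃* MR (PowerSeries (ZMod p)),
      (∀ (m : ℕ) (u : ℤ_[p]ˣ),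
          τ (mres ((u : ℤ_[p]) * (p : ℤ_[p]) ^ m)) =
            mres (PowerSeries.C (PadicInt.toZMod (u : ℤ_[p])) * PowerSeries.X ^ m)) ∧
      ∀ (a : ℤ_[p]) (b : PowerSeries (ZMod p)), τ (mres a) = mres b →
        PowerSeries.constantCoeff b = PadicInt.toZMod a := by
  have hφs : Function.Surjective (PadicInt.toZMod (p := p)) := ZMod.ringHom_surjective _
  have hψ := PowerSeries.ker_coeff_eq_max_ideal (k := ZMod p)
  have hψs : Function.Surjective (PowerSeries.constantCoeff (R := ZMod p)) :=
    fun c => ⟨PowerSeries.C c, PowerSeries.constantCoeff_C c⟩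
  have spec := MR.transferEquiv_mres_unit_mul_pow _ _ PadicInt.irreducible_p PadicInt.ker_toZMod
    hφs PowerSeries.X_irreducible hψ hψs
  refine ⟨MR.transferEquiv _ _ PadicInt.irreducible_p PadicInt.ker_toZMod hφs
    PowerSeries.X_irreducible hψ hψs,
    ⟨fun m u => spec u m (PowerSeries.constantCoeff_C _), fun a b hab => ?_⟩,
    fun τ hτ => MR.mulEquiv_ext_of_mres_unit_mul_pow PadicInt.irreducible_p fun u m => ?_⟩
  · have := congrArg (MR.residueHom PowerSeries.constantCoeff hψ) hab
    rwa [MR.residueHom_transferEquiv, MR.residueHom_mres, MR.residueHom_mres, eq_comm] at this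
  · rw [hτ.1, spec u m (PowerSeries.constantCoeff_C _)]
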